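/- arXiv:0807.1863 — 3 statements merged into one kernel-verified Lean document; each statement's English description precedes it below -/
import Mathlib

section
/- Let R be a commutative ring and let D be an ℝ-graded R-module D = ⊕_{r∈ℝ} D_r with finite support, equipped with a filtration F^q D and a differential δ preserving the filtration. If H(D / F^q D) = 0 for all q, and D is the inverse limit of the D / F^q D (which holds since D is finitely supported), then H(D, δ) = 0. More generally: if (D, δ) is a differential R-module with a decreasing filtration {F^q D}_{q∈ℕ} by δ-invariant submodules such that H(D/F^q D, δ) = 0 for all q, then H(lim← D/F^q D, δ) = 0, where the inverse limit is taken with its induced differential. -/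
/-- let `(D, δ)` be a differential `R`-module with a decreasing filtration
`{F^q D}` by `δ`-invariant submodules such that `H(D/F^q D) = 0` for all `q`. Then the
inverse limit `lim← D/F^q D` (realised concretely as compatible sequences), with its
induced componentwise differential, is acyclic. -/
theorem acyclic_inverse_limit {R : Type*} [CommRing R] {D : Type*} [AddCommGroup D]
    [Module R D]
    (δ : D →ₗ[R] D) (hδ : δ ∘ₗ δ = 0)
    (F : ℕ → Submodule R D) (hdec : ∀ q, F (q + 1) ≤ F q)
    (hinv : ∀ q, F q ≤ (F q).comap δ)
    (hquot : ∀ q, ∀ x : D ⧸ F q,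
      Submodule.mapQ (F q) (F q) δ (hinv q) x = 0 →
      ∃ y, Submodule.mapQ (F q) (F q) δ (hinv q) y = x) :
    ∀ v : ∀ q, D ⧸ F q,
      (∀ q, Submodule.mapQ (F (q + 1)) (F q) LinearMap.id
          (fun x hx => hdec q hx) (v (q + 1)) = v q) →
      (∀ q, Submodule.mapQ (F q) (F q) δ (hinv q) (v q) = 0) →
      ∃ w : ∀ q, D ⧸ F q,
        (∀ q, Submodule.mapQ (F (q + 1)) (F q) LinearMap.id
            (fun x hx => hdec q hx) (w (q + 1)) = w q) ∧
        (∀ q, Submodule.mapQ (F q) (F q) δ (hinv q) (w q) = v q) := by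
  intro v hcomp hcycle
  set d : ∀ q, (D ⧸ F q) →ₗ[R] (D ⧸ F q) :=
    fun q => Submodule.mapQ (F q) (F q) δ (hinv q) with hd
  set π : ∀ q, (D ⧸ F (q + 1)) →ₗ[R] (D ⧸ F q) :=
    fun q => Submodule.mapQ (F (q + 1)) (F q) LinearMap.id (fun x hx => hdec q hx) with hπ
  have hdd : ∀ q (x : D ⧸ F q), d q (d q x) = 0 := by
    intro q x
    obtain ⟨a, rfl⟩ := Submodule.Quotient.mk_surjective _ x
    simp only [hd, Submodule.mapQ_apply]
    have : δ (δ a) = 0 := congrFun (congrArg DFunLike.coe hδ) a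
    rw [this, Submodule.Quotient.mk_zero]
  have hcommute : ∀ q (x : D ⧸ F (q + 1)), π q (d (q + 1) x) = d q (π q x) := by
    intro q x
    obtain ⟨a, rfl⟩ := Submodule.Quotient.mk_surjective _ x
    simp [hd, hπ, Submodule.mapQ_apply]
  have hπsurj : ∀ q (z : D ⧸ F q), ∃ z' : D ⧸ F (q + 1), π q z' = z := by
    intro q z
    obtain ⟨a, rfl⟩ := Submodule.Quotient.mk_surjective _ z
    exact ⟨Submodule.Quotient.mk a, by simp [hπ, Submodule.mapQ_apply]⟩
  have step : ∀ q (wq : D ⧸ F q), d q wq = v q →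
      ∃ w' : D ⧸ F (q + 1), d (q + 1) w' = v (q + 1) ∧ π q w' = wq := by
    intro q wq hwq
    obtain ⟨y, hy⟩ := hquot (q + 1) (v (q + 1)) (hcycle (q + 1))
    have hπy : d q (π q y) = v q := by
      rw [← hcommute, hy]; exact hcomp q
    have hcy : d q (wq - π q y) = 0 := by
      rw [map_sub, hwq, hπy, sub_self]
    obtain ⟨z, hz⟩ := hquot q (wq - π q y) hcy
    obtain ⟨z', hz'⟩ := hπsurj q z
    refine ⟨y + d (q + 1) z', ?_, ?_⟩
    · rw [map_add, hy, hdd, add_zero]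
    · rw [map_add, hcommute, hz', hz]
      abel
  choose next hnext1 hnext2 using step
  obtain ⟨w0, hw0⟩ := hquot 0 (v 0) (hcycle 0)
  let W : ∀ q, {w : D ⧸ F q // d q w = v q} :=
    fun q => Nat.rec ⟨w0, hw0⟩ (fun n p => ⟨next n p.1 p.2, hnext1 n p.1 p.2⟩) q
  exact ⟨fun q => (W q).1, fun q => hnext2 q (W q).1 (W q).2, fun q => (W q).2⟩
end

section
/- Seidel's gap lemma: Let R be a commutative ring, ε > 0, and let D = ⊕_{r∈ℝ} D_r be an ℝ-graded R-module with finite support such that any two elements r, s of the support satisfy |r - s| ∉ [ε, 2ε). Suppose δ : D → D is a differential (δ² = 0) which is a sum δ = δ_low + δ_high, where δ_low is a differential of order [0, ε) (i.e. δ_low(D_r) ⊆ ⊕_{0 ≤ s < ε} D_{r+s}) and δ_high has order [2ε, ∞). If H(D, δ_low) = 0 then H(D, δ) = 0. -/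
open DirectSum

/-- Seidel's gap lemma: let `D = ⊕_{r∈ℝ} D_r` be a finitely supported
ℝ-graded `R`-module with gap `[ε, 2ε)`, and `δ = δ_low + δ_high` a differential with
`δ_low` a differential of order `[0, ε)` and `δ_high` of order `[2ε, ∞)`. If
`H(D, δ_low) = 0` then `H(D, δ) = 0`. -/
theorem seidel_gap_lemma {R : Type*} [CommRing R] {D : ℝ → Type*}
    [∀ r, AddCommGroup (D r)] [∀ r, Module R (D r)]
    (hsupp : {r : ℝ | ∃ x : D r, x ≠ 0}.Finite)
    (ε : ℝ) (hε : 0 < ε)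
    (hgap : ∀ r ∈ {r : ℝ | ∃ x : D r, x ≠ 0}, ∀ s ∈ {r : ℝ | ∃ x : D r, x ≠ 0},
      |r - s| ∉ Set.Ico ε (2 * ε))
    (δ δlow δhigh : (⨁ r, D r) →ₗ[R] ⨁ r, D r)
    (hsum : δ = δlow + δhigh)
    (hδ2 : δ ∘ₗ δ = 0) (hlow2 : δlow ∘ₗ δlow = 0)
    (hordlow : ∀ (r : ℝ) (x : D r) (u : ℝ),
      (δlow (DirectSum.of D r x)) u ≠ 0 → u - r ∈ Set.Ico 0 ε)
    (hordhigh : ∀ (r : ℝ) (x : D r) (u : ℝ),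
      (δhigh (DirectSum.of D r x)) u ≠ 0 → 2 * ε ≤ u - r)
    (hacyc : ∀ x, δlow x = 0 → ∃ y, δlow y = x) :
    ∀ x, δ x = 0 → ∃ y, δ y = x := by
  classical
  set S : Set ℝ := {r : ℝ | ∃ x : D r, x ≠ 0} with hSdef
  have hmemS : ∀ (z : ⨁ r, D r) (u : ℝ), z u ≠ 0 → u ∈ S := fun z u h => ⟨z u, h⟩
  -- decomposition of a component of `f z` into single-source contributions
  have hcomp : ∀ (f : (⨁ r, D r) →ₗ[R] ⨁ r, D r) (z : ⨁ r, D r) (u : ℝ),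
      (f z) u ≠ 0 → ∃ r, z r ≠ 0 ∧ (f (DirectSum.of D r (z r))) u ≠ 0 := by
    intro f z u h
    by_contra hc
    push_neg at hc
    apply h
    rw [← DirectSum.sum_support_of z, map_sum, DFinsupp.finset_sum_apply]
    refine Finset.sum_eq_zero fun r hr => ?_
    exact hc r (DFinsupp.mem_support_iff.mp hr)
  have Hlow : ∀ (z : ⨁ r, D r) (u : ℝ), (δlow z) u ≠ 0 →
      ∃ r, z r ≠ 0 ∧ 0 ≤ u - r ∧ u - r < ε := by
    intro z u h
    obtain ⟨r, hzr, hf⟩ := hcomp δlow z u h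
    obtain ⟨h1, h2⟩ := hordlow r (z r) u hf
    exact ⟨r, hzr, h1, h2⟩
  have Hhigh : ∀ (z : ⨁ r, D r) (u : ℝ), (δhigh z) u ≠ 0 →
      ∃ r, z r ≠ 0 ∧ 2 * ε ≤ u - r := by
    intro z u h
    obtain ⟨r, hzr, hf⟩ := hcomp δhigh z u h
    exact ⟨r, hzr, hordhigh r (z r) u hf⟩
  have hgap' : ∀ u ∈ S, ∀ v ∈ S, |u - v| < 2 * ε → |u - v| < ε := by
    intro u hu v hv h
    by_contra h2
    exact hgap u hu v hv ⟨le_of_not_gt h2, h⟩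
  have hδapp : ∀ z : ⨁ r, D r, δ (δ z) = 0 := by
    intro z
    have := LinearMap.ext_iff.mp hδ2 z
    simpa using this
  suffices H : ∀ n : ℕ, ∀ x : ⨁ r, D r, δ x = 0 →
      (hsupp.toFinset.filter (fun s => ∃ u, x u ≠ 0 ∧ u ≤ s)).card ≤ n →
      ∃ y, δ y = x by
    intro x hx
    exact H _ x hx le_rfl
  intro n
  induction n with
  | zero =>
    intro x hx hcard
    have hx0 : x = 0 := by
      refine DFinsupp.ext fun u => ?_
      rw [DFinsupp.zero_apply]
      by_contra hu
      have husup : u ∈ hsupp.toFinset := (Set.Finite.mem_toFinset _).mpr (hmemS x u hu)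
      have hmemf : u ∈ hsupp.toFinset.filter (fun s => ∃ v, x v ≠ 0 ∧ v ≤ s) :=
        Finset.mem_filter.mpr ⟨husup, u, hu, le_rfl⟩
      have := Finset.card_pos.mpr ⟨u, hmemf⟩
      omega
    exact ⟨0, by simp [hx0]⟩
  | succ n ih =>
    intro x hx hcard
    by_cases hx0 : x = 0
    · exact ⟨0, by simp [hx0]⟩
    obtain ⟨u0, hu0⟩ : ∃ u, x u ≠ 0 := by
      by_contra hc
      push_neg at hc
      exact hx0 (DFinsupp.ext fun u => by rw [hc u, DFinsupp.zero_apply])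
    set m := x.support.min' ⟨u0, DFinsupp.mem_support_iff.mpr hu0⟩ with hmdef
    have hxm : x m ≠ 0 := DFinsupp.mem_support_iff.mp (x.support.min'_mem _)
    have hmmin : ∀ u, x u ≠ 0 → m ≤ u := fun u hu =>
      Finset.min'_le _ _ (DFinsupp.mem_support_iff.mpr hu)
    have hmS : m ∈ S := hmemS x m hxm
    set p : ℝ → Prop := fun s => |s - m| < ε with hpdef
    -- generic facts about filtering
    have hsplit : ∀ z : ⨁ r, D r,
        DFinsupp.filter p z + DFinsupp.filter (fun s => ¬ p s) z = z := by
      intro z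
      refine DFinsupp.ext fun u => ?_
      rw [DFinsupp.add_apply, DFinsupp.filter_apply, DFinsupp.filter_apply]
      split_ifs with h
      · rw [add_zero]
      · rw [zero_add]
    have hfilt : ∀ (z : ⨁ r, D r) (u : ℝ),
        (DFinsupp.filter p z) u ≠ 0 → z u ≠ 0 ∧ |u - m| < ε := by
      intro z u h
      rw [DFinsupp.filter_apply] at h
      split_ifs at h with hp
      · exact ⟨h, hp⟩
      · exact absurd rfl h
    have hfiltneg : ∀ (z : ⨁ r, D r) (u : ℝ),
        (DFinsupp.filter (fun s => ¬ p s) z) u ≠ 0 → z u ≠ 0 ∧ ¬ |u - m| < ε := by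
      intro z u h
      rw [DFinsupp.filter_apply] at h
      split_ifs at h with hp
      · exact absurd rfl h
      · exact ⟨h, hp⟩
    set x₁ : ⨁ r, D r := DFinsupp.filter p x with hx1def
    set x₂ : ⨁ r, D r := DFinsupp.filter (fun s => ¬ p s) x with hx2def
    have hx2' : ∀ u, x₂ u ≠ 0 → m + 2 * ε ≤ u := by
      intro u hu
      obtain ⟨hxu, hum⟩ := hfiltneg x u hu
      have huS : u ∈ S := hmemS x u hxu
      have hmu : m ≤ u := hmmin u hxu
      have habs : 2 * ε ≤ |u - m| := by
        by_contra hlt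
        push_neg at hlt
        exact hum (hgap' u huS m hmS hlt)
      rw [abs_of_nonneg (by linarith)] at habs
      linarith
    -- the cluster part of x is a δlow-cycle
    have hA : δlow x₁ = 0 := by
      refine DFinsupp.ext fun u => ?_
      rw [DFinsupp.zero_apply]
      by_contra hne
      obtain ⟨r, hr, h0, h1⟩ := Hlow x₁ u hne
      obtain ⟨hxr, hrm⟩ := hfilt x r hr
      have hmr : m ≤ r := hmmin r hxr
      have hu2 : u < m + 2 * ε := by
        rw [abs_of_nonneg (by linarith)] at hrm
        linarith
      have hδxu : (δ x) u = 0 := by rw [hx, DFinsupp.zero_apply]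
      have hlow2u : (δlow x₂) u = 0 := by
        by_contra h2
        obtain ⟨r', hr', h0', h1'⟩ := Hlow x₂ u h2
        have := hx2' r' hr'
        linarith
      have hhighu : (δhigh x) u = 0 := by
        by_contra h2
        obtain ⟨r', hr', h2'⟩ := Hhigh x u h2
        have := hmmin r' (by
          intro hz
          exact hr' hz)
        linarith
      have hsplitlow : (δlow x) u = (δlow x₁) u + (δlow x₂) u := by
        conv_lhs => rw [← hsplit x]
        rw [map_add, DFinsupp.add_apply]
      have hδu : (δ x) u = (δlow x) u + (δhigh x) u := by
        rw [hsum, LinearMap.add_apply, DFinsupp.add_apply]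
      rw [hδu, hsplitlow, hlow2u, hhighu, add_zero, add_zero] at hδxu
      exact hne hδxu
    obtain ⟨y, hy⟩ := hacyc x₁ hA
    set y₁ : ⨁ r, D r := DFinsupp.filter p y with hy1def
    set y₂ : ⨁ r, D r := DFinsupp.filter (fun s => ¬ p s) y with hy2def
    -- the cluster part of y already bounds x₁
    have hB : δlow y₁ = x₁ := by
      refine DFinsupp.ext fun u => ?_
      by_cases hpu : |u - m| < ε
      · have h2 : (δlow y₂) u = 0 := by
          by_contra h2
          obtain ⟨r, hr, h0, h1⟩ := Hlow y₂ u h2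
          obtain ⟨hyr, hrm⟩ := hfiltneg y r hr
          have hrS : r ∈ S := hmemS y r hyr
          have habs : 2 * ε ≤ |r - m| := by
            by_contra hlt
            push_neg at hlt
            exact hrm (hgap' r hrS m hmS hlt)
          rw [abs_lt] at hpu
          rcases le_or_gt m r with hc | hc
          · rw [abs_of_nonneg (by linarith)] at habs
            linarith
          · rw [abs_of_nonpos (by linarith)] at habs
            linarith
        have hsplity : (δlow y) u = (δlow y₁) u + (δlow y₂) u := by
          conv_lhs => rw [← hsplit y]
          rw [map_add, DFinsupp.add_apply]
        rw [hy] at hsplity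
        rw [h2, add_zero] at hsplity
        exact hsplity.symm
      · have hl : (δlow y₁) u = 0 := by
          by_contra h2
          obtain ⟨r, hr, h0, h1⟩ := Hlow y₁ u h2
          obtain ⟨hyr, hrm⟩ := hfilt y r hr
          have huS : u ∈ S := hmemS _ u h2
          have hlt : |u - m| < 2 * ε := by
            rw [abs_lt] at hrm ⊢
            constructor <;> linarith [hrm.1, hrm.2]
          exact hpu (hgap' u huS m hmS hlt)
        have hr0 : x₁ u = 0 := by
          by_contra h2
          exact hpu (hfilt x u h2).2
        rw [hl, hr0]
    have hδy1 : δ y₁ = x₁ + δhigh y₁ := by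
      rw [hsum, LinearMap.add_apply, hB]
    set x' := x - δ y₁ with hx'def
    have hδx' : δ x' = 0 := by
      rw [hx'def, map_sub, hx, hδapp y₁, sub_zero]
    have hx'supp : ∀ u, x' u ≠ 0 → m + 2 * ε ≤ u := by
      intro u hu
      have huS : u ∈ S := hmemS x' u hu
      have hxu : x u = x₁ u + x₂ u := by
        conv_lhs => rw [← hsplit x]
        rw [DFinsupp.add_apply]
      have hval : x' u = x₂ u - (δhigh y₁) u := by
        rw [hx'def, DFinsupp.sub_apply, hδy1, DFinsupp.add_apply, hxu]
        abel
      rw [hval] at hu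
      by_cases h2 : x₂ u = 0
      · have ht : (δhigh y₁) u ≠ 0 := by
          intro h
          rw [h2, h, sub_zero] at hu
          exact hu rfl
        obtain ⟨r, hr, hge⟩ := Hhigh y₁ u ht
        obtain ⟨hyr, hrm⟩ := hfilt y r hr
        rw [abs_lt] at hrm
        have habs : 2 * ε ≤ |u - m| := by
          by_contra hlt
          push_neg at hlt
          have := hgap' u huS m hmS hlt
          rw [abs_lt] at this
          linarith [this.2]
        rw [abs_of_nonneg (by linarith)] at habs
        linarith
      · exact hx2' u h2
    have hnewcard :
        (hsupp.toFinset.filter (fun s => ∃ u, x' u ≠ 0 ∧ u ≤ s)).card ≤ n := by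
      have hers : hsupp.toFinset.filter (fun s => ∃ u, x' u ≠ 0 ∧ u ≤ s) ⊆
          (hsupp.toFinset.filter (fun s => ∃ u, x u ≠ 0 ∧ u ≤ s)).erase m := by
        intro s hs
        rw [Finset.mem_filter] at hs
        obtain ⟨hsS, u, hu, hus⟩ := hs
        have h2 := hx'supp u hu
        refine Finset.mem_erase.mpr ⟨?_, Finset.mem_filter.mpr ⟨hsS, m, hxm, by linarith⟩⟩
        intro hsm
        rw [hsm] at hus
        linarith
      have hmold : m ∈ hsupp.toFinset.filter (fun s => ∃ u, x u ≠ 0 ∧ u ≤ s) :=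
        Finset.mem_filter.mpr ⟨(Set.Finite.mem_toFinset _).mpr hmS, m, hxm, le_rfl⟩
      have h1 := Finset.card_le_card hers
      rw [Finset.card_erase_of_mem hmold] at h1
      omega
    obtain ⟨y', hy'⟩ := ih x' hδx' hnewcard
    refine ⟨y₁ + y', ?_⟩
    rw [map_add, hy', hx'def]
    abel
end

section
/- The counterexample to dropping finite support in the gap lemma: let D = R[x] ⊕ R[y] with ℝ-grading supported on ℤ≥0, where D_n is spanned by x^n and y^n, and let δ(f(x), g(y)) = (0, (1 - y)·f(y)) (substituting y for x in f). Then δ is a differential, its 'low-order part' δ_low(f(x), g(y)) = (0, f(y)) is acyclic, but H(D, δ) is a free R-module of rank 1 generated by the class of (0, 1). -/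
open Polynomial

/-- the counterexample to dropping finite support in the gap lemma.
`D = R[x] ⊕ R[y]`, `δ(f, g) = (0, (1 - y)·f)` is a differential whose low-order part
`δ_low(f, g) = (0, f)` is acyclic, but `H(D, δ)` is free of rank 1 generated by the
class of `(0, 1)`. -/
theorem gap_counterexample (R : Type*) [CommRing R] :
    let δ : Polynomial R × Polynomial R → Polynomial R × Polynomial R :=
      fun p => (0, (1 - Polynomial.X) * p.1)
    let δlow : Polynomial R × Polynomial R → Polynomial R × Polynomial R :=
      fun p => (0, p.1)
    (∀ p, δ (δ p) = 0) ∧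
    (∀ p, δlow (δlow p) = 0) ∧
    (∀ p, δlow p = 0 → ∃ q, δlow q = p) ∧
    (δ ((0 : Polynomial R), (1 : Polynomial R)) = 0) ∧
    (∀ p : Polynomial R × Polynomial R, δ p = 0 →
      ∃! c : R, ∃ q, p - c • (((0 : Polynomial R), (1 : Polynomial R))) = δ q) := by
  intro δ δlow
  have hreg : ∀ f : Polynomial R, (1 - Polynomial.X) * f = 0 → f = 0 := by
    intro f hf
    have hm : (X - 1 : Polynomial R).Monic := monic_X_sub_C 1
    have : (X - 1 : Polynomial R) * f = 0 := by
      have : -((1 - X : Polynomial R) * f) = 0 := by rw [hf]; ring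
      calc (X - 1 : Polynomial R) * f = -((1 - X) * f) := by ring
        _ = 0 := this
    exact (hm.mul_right_eq_zero_iff).mp this
  refine ⟨?_, ?_, ?_, ?_, ?_⟩
  · intro p; simp [δ, Prod.ext_iff]
  · intro p; simp [δlow, Prod.ext_iff]
  · intro p hp
    have h1 : p.1 = 0 := congrArg Prod.snd hp
    exact ⟨(p.2, 0), by simp [δlow, Prod.ext_iff, h1.symm]⟩
  · simp [δ, Prod.ext_iff]
  · intro p hp
    have h1 : p.1 = 0 := hreg p.1 (congrArg Prod.snd hp)
    refine ⟨p.2.eval 1, ?_, ?_⟩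
    · have hd : (X - C 1 : Polynomial R) ∣ (p.2 - C (p.2.eval 1)) := by
        apply dvd_iff_isRoot.mpr
        simp [IsRoot]
      obtain ⟨q, hq⟩ := hd
      refine ⟨(-q, 0), ?_⟩
      simp only [δ, Prod.ext_iff, Prod.fst_sub, Prod.snd_sub, Prod.smul_fst, Prod.smul_snd,
        smul_zero, h1]
      constructor
      · simp [h1]
      · have : p.2 - p.2.eval 1 • (1 : Polynomial R) = (X - C 1) * q := by
          rw [← hq]; simp [smul_eq_C_mul]
        rw [this, C_1]; ring
    · rintro c ⟨q, hq⟩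
      have h2 : p.2 - C c = (1 - X) * q.1 := by
        have := congrArg Prod.snd hq
        simpa [smul_eq_C_mul] using this
      have := congrArg (Polynomial.eval 1) h2
      simp at this
      linear_combination -this
end
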